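/- Let h be μ̄-strongly convex and (L+μ)-smooth with minimizer w⋆, and let gradient descent with 0 < α < 2/(L+μ) start at w⁽⁰⁾. Then for any target γ ∈ (0,1], after n ≥ 2β·log((L+μ)/(γμ̄)) iterations (β = 2/(αμ̄(2-α(L+μ)))), the iterate w⁽ⁿ⁾ satisfies ‖∇h(w⁽ⁿ⁾)‖ ≤ γ‖∇h(w⁽⁰⁾)‖, i.e., w⁽ⁿ⁾ is a γ-inexact solution. -/

import Mathlib

/-!
Strong convexity makes `∇h` strongly monotone, and convexity together with the
`(L+μ)`-Lipschitz gradient makes it cocoercive (Baillon–Haddad). Combined, they show that one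
gradient step shrinks `‖w - w⋆‖²` by the factor `1 - αμ̄(2 - α(L+μ)) ≤ exp(-αμ̄(2 - α(L+μ)))`.
Since `‖∇h(wₙ)‖ ≤ (L+μ)‖wₙ - w⋆‖` and `μ̄‖w₀ - w⋆‖ ≤ ‖∇h(w₀)‖`, it remains to check that the
iteration bound makes `(L+μ)/μ̄ · exp(-nαμ̄(2 - α(L+μ))/2)` at most `γ`.
-/

open RealInnerProductSpace Set

section Convexity

variable {E : Type*} [NormedAddCommGroup E] [NormedSpace ℝ E] {f : E → ℝ}

theorem HasFDerivAt.hasDerivAt_comp_add_smul {f' : E →L[ℝ] ℝ} {x v : E} {t : ℝ}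
    (hf : HasFDerivAt f f' (x + t • v)) : HasDerivAt (fun s : ℝ ↦ f (x + s • v)) (f' v) t := by
  have hline : HasDerivAt (fun s : ℝ ↦ x + s • v) v t := by
    simpa using ((hasDerivAt_id t).smul_const v).const_add x
  exact hf.comp_hasDerivAt t hline

theorem ConvexOn.add_le_of_hasFDerivAt (hf : ConvexOn ℝ univ f) {f' : E →L[ℝ] ℝ} {x : E}
    (hf' : HasFDerivAt f f' x) (y : E) : f x + f' (y - x) ≤ f y := by
  have hline : ConvexOn ℝ univ fun t : ℝ ↦ f (x + t • (y - x)) := by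
    simpa [Function.comp_def, AffineMap.lineMap_apply_module', add_comm] using
      hf.comp_affineMap (AffineMap.lineMap x y)
  have hderiv : HasDerivAt (fun t : ℝ ↦ f (x + t • (y - x))) (f' (y - x)) 0 :=
    HasFDerivAt.hasDerivAt_comp_add_smul (by simpa using hf')
  have := hline.le_slope_of_hasDerivAt (mem_univ 0) (mem_univ 1) zero_lt_one hderiv
  simp only [slope_def_field, zero_smul, one_smul, add_zero, sub_zero, div_one,
    add_sub_cancel] at this
  linarith

end Convexity

section Gradient

variable {E : Type*} [NormedAddCommGroup E] [InnerProductSpace ℝ E] [CompleteSpace E]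
  {f : E → ℝ} {μ K : ℝ}

theorem StrongConvexOn.add_inner_gradient_add_le (hf : StrongConvexOn univ μ f) {x : E}
    (hx : DifferentiableAt ℝ f x) (y : E) :
    f x + ⟪gradient f x, y - x⟫ + μ / 2 * ‖y - x‖ ^ 2 ≤ f y := by
  have hg := hx.hasGradientAt.hasFDerivAt.sub
    ((hasStrictFDerivAt_norm_sq x).hasFDerivAt.const_mul (μ / 2))
  have := (strongConvexOn_iff_convex.mp hf).add_le_of_hasFDerivAt hg y
  have hy : ‖y‖ ^ 2 = ‖x‖ ^ 2 + 2 * ⟪x, y - x⟫ + ‖y - x‖ ^ 2 := by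
    rw [← norm_add_sq_real, add_sub_cancel]
  simp only [sub_apply, smul_apply, InnerProductSpace.toDual_apply_apply, coe_innerSL_apply,
    nsmul_eq_mul, Nat.cast_ofNat, smul_eq_mul] at this
  rw [hy] at this
  linear_combination this

theorem StrongConvexOn.mul_sq_norm_sub_le_inner_gradient_sub (hf : StrongConvexOn univ μ f)
    {x y : E} (hx : DifferentiableAt ℝ f x) (hy : DifferentiableAt ℝ f y) :
    μ * ‖x - y‖ ^ 2 ≤ ⟪gradient f x - gradient f y, x - y⟫ := by
  have hxy := hf.add_inner_gradient_add_le hx y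
  have hyx := hf.add_inner_gradient_add_le hy x
  rw [← neg_sub x y, inner_neg_right, norm_neg] at hxy
  rw [inner_sub_left]
  linarith

theorem StrongConvexOn.mul_norm_sub_le_norm_gradient (hf : StrongConvexOn univ μ f)
    {x xmin : E} (hx : DifferentiableAt ℝ f x) (hxmin : DifferentiableAt ℝ f xmin)
    (hmin : gradient f xmin = 0) : μ * ‖x - xmin‖ ≤ ‖gradient f x‖ := by
  have hmono := hf.mul_sq_norm_sub_le_inner_gradient_sub hx hxmin
  rw [hmin, sub_zero] at hmono
  rcases (norm_nonneg (x - xmin)).eq_or_lt with hzero | hpos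
  · rw [← hzero, mul_zero]
    exact norm_nonneg _
  · refine le_of_mul_le_mul_right ?_ hpos
    calc μ * ‖x - xmin‖ * ‖x - xmin‖ = μ * ‖x - xmin‖ ^ 2 := by ring
      _ ≤ ⟪gradient f x, x - xmin⟫ := hmono
      _ ≤ ‖gradient f x‖ * ‖x - xmin‖ := real_inner_le_norm _ _

theorem le_add_inner_gradient_add_sq_of_lipschitz (hf : Differentiable ℝ f)
    (hLip : ∀ a b, ‖gradient f a - gradient f b‖ ≤ K * ‖a - b‖) (x y : E) :
    f y ≤ f x + ⟪gradient f x, y - x⟫ + K / 2 * ‖y - x‖ ^ 2 := by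
  set v := y - x
  let φ : ℝ → ℝ := fun t ↦ f (x + t • v) - t * ⟪gradient f x, v⟫ - K / 2 * ‖v‖ ^ 2 * t ^ 2
  have hφ : ∀ t, HasDerivAt φ
      (⟪gradient f (x + t • v), v⟫ - ⟪gradient f x, v⟫ - K * ‖v‖ ^ 2 * t) t := by
    intro t
    refine ((((hf (x + t • v)).hasGradientAt.hasFDerivAt.hasDerivAt_comp_add_smul).sub
      ((hasDerivAt_id t).mul_const ⟪gradient f x, v⟫)).sub
      ((hasDerivAt_pow 2 t).const_mul (K / 2 * ‖v‖ ^ 2))).congr_deriv ?_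
    simp only [InnerProductSpace.toDual_apply_apply, Nat.cast_ofNat]
    ring
  have hφ_nonpos : ∀ t ∈ interior (Ici (0 : ℝ)),
      ⟪gradient f (x + t • v), v⟫ - ⟪gradient f x, v⟫ - K * ‖v‖ ^ 2 * t ≤ 0 := by
    intro t ht
    rw [interior_Ici, mem_Ioi] at ht
    have hgrad : ‖gradient f (x + t • v) - gradient f x‖ ≤ K * (t * ‖v‖) := by
      simpa [norm_smul, abs_of_pos ht] using hLip (x + t • v) x
    have := real_inner_le_norm (gradient f (x + t • v) - gradient f x) v
    rw [inner_sub_left] at this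
    nlinarith [norm_nonneg v]
  have hanti : AntitoneOn φ (Ici 0) :=
    antitoneOn_of_hasDerivWithinAt_nonpos (convex_Ici 0)
      (fun t _ ↦ (hφ t).continuousAt.continuousWithinAt)
      (fun t _ ↦ (hφ t).hasDerivWithinAt) hφ_nonpos
  have := hanti self_mem_Ici (mem_Ici.2 zero_le_one) zero_le_one
  simp only [φ, v, one_smul, zero_smul, add_zero, add_sub_cancel, one_mul, zero_mul, one_pow,
    mul_one, sub_zero, ne_eq, OfNat.ofNat_ne_zero, not_false_eq_true, zero_pow] at this
  linarith

theorem ConvexOn.sq_norm_gradient_sub_le (hconv : ConvexOn ℝ univ f) (hf : Differentiable ℝ f)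
    (hK : 0 < K) (hLip : ∀ a b, ‖gradient f a - gradient f b‖ ≤ K * ‖a - b‖) (x y : E) :
    ‖gradient f y - gradient f x‖ ^ 2 ≤ 2 * K * (f y - f x - ⟪gradient f x, y - x⟫) := by
  set u := gradient f y - gradient f x
  -- `f z` is bounded below by convexity at `x` and above by the descent inequality at `y`.
  set z := y - K⁻¹ • u
  have hlower : f x + ⟪gradient f x, z - x⟫ ≤ f z := by
    simpa using hconv.add_le_of_hasFDerivAt (hf x).hasGradientAt.hasFDerivAt z
  have hupper := le_add_inner_gradient_add_sq_of_lipschitz hf hLip y z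
  have hzx : z - x = (y - x) - K⁻¹ • u := sub_right_comm _ _ _
  have hzy : z - y = -(K⁻¹ • u) := sub_sub_cancel_left _ _
  have hu : ⟪gradient f y, u⟫ - ⟪gradient f x, u⟫ = ‖u‖ ^ 2 := by
    rw [← inner_sub_left, real_inner_self_eq_norm_sq]
  rw [hzx, inner_sub_right, real_inner_smul_right] at hlower
  rw [hzy, inner_neg_right, real_inner_smul_right, norm_neg, norm_smul, Real.norm_eq_abs,
    abs_inv, abs_of_pos hK, mul_pow] at hupper
  have hKK : K * (K⁻¹) ^ 2 = K⁻¹ := by field_simp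
  have hbregman : K⁻¹ / 2 * ‖u‖ ^ 2 ≤ f y - f x - ⟪gradient f x, y - x⟫ := by
    linear_combination hlower + hupper - K⁻¹ * hu + ‖u‖ ^ 2 / 2 * hKK
  calc ‖u‖ ^ 2 = 2 * K * (K⁻¹ / 2 * ‖u‖ ^ 2) := by field_simp
    _ ≤ 2 * K * (f y - f x - ⟪gradient f x, y - x⟫) := by gcongr

theorem ConvexOn.sq_norm_gradient_sub_le_mul_inner (hconv : ConvexOn ℝ univ f)
    (hf : Differentiable ℝ f) (hK : 0 < K)
    (hLip : ∀ a b, ‖gradient f a - gradient f b‖ ≤ K * ‖a - b‖) (x y : E) :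
    ‖gradient f x - gradient f y‖ ^ 2 ≤ K * ⟪gradient f x - gradient f y, x - y⟫ := by
  have hxy := hconv.sq_norm_gradient_sub_le hf hK hLip x y
  have hyx := hconv.sq_norm_gradient_sub_le hf hK hLip y x
  rw [norm_sub_rev, ← neg_sub x y, inner_neg_right] at hxy
  rw [inner_sub_left]
  linear_combination (hxy + hyx) / 2

theorem StrongConvexOn.norm_sub_smul_gradient_sub_sq_le (hf : StrongConvexOn univ μ f)
    (hμ : 0 ≤ μ) (hdiff : Differentiable ℝ f) (hK : 0 < K)
    (hLip : ∀ a b, ‖gradient f a - gradient f b‖ ≤ K * ‖a - b‖) {xmin : E}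
    (hmin : gradient f xmin = 0) {α : ℝ} (hα : 0 ≤ α) (hαK : α * K ≤ 2) (x : E) :
    ‖x - α • gradient f x - xmin‖ ^ 2 ≤ (1 - α * μ * (2 - α * K)) * ‖x - xmin‖ ^ 2 := by
  have hconv : ConvexOn ℝ univ f := strongConvexOn_zero.mp (hf.mono hμ)
  have hcoco := hconv.sq_norm_gradient_sub_le_mul_inner hdiff hK hLip x xmin
  have hmono := hf.mul_sq_norm_sub_le_inner_gradient_sub (hdiff x) (hdiff xmin)
  rw [hmin, sub_zero] at hcoco hmono
  have hexpand : ‖x - α • gradient f x - xmin‖ ^ 2 = ‖x - xmin‖ ^ 2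
      - 2 * α * ⟪gradient f x, x - xmin⟫ + α ^ 2 * ‖gradient f x‖ ^ 2 := by
    rw [sub_right_comm, norm_sub_sq_real, real_inner_smul_right, norm_smul, Real.norm_eq_abs,
      mul_pow, sq_abs, real_inner_comm]
    ring
  rw [hexpand]
  have := mul_le_mul_of_nonneg_left hcoco (sq_nonneg α)
  have := mul_le_mul_of_nonneg_left hmono (mul_nonneg hα (sub_nonneg.2 hαK))
  linarith

theorem StrongConvexOn.norm_sub_le_of_gradientDescent (hf : StrongConvexOn univ μ f)
    (hμ : 0 ≤ μ) (hdiff : Differentiable ℝ f) (hK : 0 < K)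
    (hLip : ∀ a b, ‖gradient f a - gradient f b‖ ≤ K * ‖a - b‖) {xmin : E}
    (hmin : gradient f xmin = 0) {α : ℝ} (hα : 0 ≤ α) (hαK : α * K ≤ 2) (w : ℕ → E)
    (hw : ∀ k, w (k + 1) = w k - α • gradient f (w k)) (n : ℕ) :
    ‖w n - xmin‖ ≤ Real.exp (-(α * μ * (2 - α * K)) / 2) ^ n * ‖w 0 - xmin‖ := by
  set c := α * μ * (2 - α * K)
  refine le_geom (u := fun k ↦ ‖w k - xmin‖) (Real.exp_pos _).le n fun k _ ↦ ?_
  have hstep := hf.norm_sub_smul_gradient_sub_sq_le hμ hdiff hK hLip hmin hα hαK (w k)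
  rw [← hw k] at hstep
  rw [← sq_le_sq₀ (norm_nonneg _) (by positivity)]
  calc ‖w (k + 1) - xmin‖ ^ 2 ≤ (1 - c) * ‖w k - xmin‖ ^ 2 := hstep
    _ ≤ Real.exp (-c) * ‖w k - xmin‖ ^ 2 := by
      gcongr
      linarith [Real.add_one_le_exp (-c)]
    _ = (Real.exp (-c / 2) * ‖w k - xmin‖) ^ 2 := by
      rw [mul_pow, ← Real.exp_nat_mul]
      ring_nf

end Gradient

theorem exp_neg_div_two_pow_le_inv_of_log_le {c a : ℝ} {n : ℕ} (hc : 0 < c) (ha : 0 < a)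
    (hn : 2 * (2 / c) * Real.log a ≤ n) : Real.exp (-c / 2) ^ n ≤ a⁻¹ := by
  have hcn : 4 * Real.log a ≤ c * n := by
    have := mul_le_mul_of_nonneg_left hn hc.le
    rwa [show c * (2 * (2 / c) * Real.log a) = 4 * Real.log a by field_simp; ring] at this
  have hcn₀ : 0 ≤ c * n := by positivity
  -- Averaging `hcn` and `hcn₀` gives `2 * log a ≤ c * n`, whatever the sign of `log a`.
  rw [← Real.exp_nat_mul, ← Real.exp_log ha, ← Real.exp_neg, Real.exp_le_exp]
  linarith

theorem gd_gamma_inexact_after_enough_iterations_general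
    {d : ℕ} (h : EuclideanSpace ℝ (Fin d) → ℝ)
    (L μ μbar α γ β : ℝ) (hμbar : 0 < μbar)
    (hα : 0 < α) (hα2 : α < 2 / (L + μ))
    (hγ0 : 0 < γ)
    (hβ : β = 2 / (α * μbar * (2 - α * (L + μ))))
    (hdiff : Differentiable ℝ h)
    (hsc : ConvexOn ℝ Set.univ
      (fun v : EuclideanSpace ℝ (Fin d) => h v - (μbar / 2) * ‖v‖ ^ 2))
    (hLip : ∀ x y, ‖gradient h x - gradient h y‖ ≤ (L + μ) * ‖x - y‖)
    (wstar : EuclideanSpace ℝ (Fin d)) (hmin : ∀ v, h wstar ≤ h v)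
    (w : ℕ → EuclideanSpace ℝ (Fin d))
    (hiter : ∀ k : ℕ, w (k + 1) = w k - α • gradient h (w k))
    (n : ℕ) (hn : (n : ℝ) ≥ 2 * β * Real.log ((L + μ) / (γ * μbar))) :
    ‖gradient h (w n)‖ ≤ γ * ‖gradient h (w 0)‖ := by
  have hK : 0 < L + μ := (div_pos_iff_of_pos_left two_pos).mp (hα.trans hα2)
  have hαK : α * (L + μ) < 2 := (lt_div_iff₀ hK).mp hα2
  have hstrong : StrongConvexOn univ μbar h := strongConvexOn_iff_convex.mpr hsc
  have hlocal : IsLocalMin h wstar := Filter.Eventually.of_forall hmin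
  have hcrit : gradient h wstar = 0 := by simp [gradient, hlocal.fderiv_eq_zero]
  have hrate : 0 < α * μbar * (2 - α * (L + μ)) := by
    have := sub_pos.2 hαK
    positivity
  have hdist := hstrong.norm_sub_le_of_gradientDescent hμbar.le hdiff hK hLip hcrit hα.le hαK.le
    w hiter n
  have hexp := exp_neg_div_two_pow_le_inv_of_log_le hrate (by positivity) (hβ ▸ hn)
  calc ‖gradient h (w n)‖ = ‖gradient h (w n) - gradient h wstar‖ := by rw [hcrit, sub_zero]
    _ ≤ (L + μ) * ‖w n - wstar‖ := hLip _ _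
    _ ≤ (L + μ) * (((L + μ) / (γ * μbar))⁻¹ * ‖w 0 - wstar‖) := by
      gcongr
      exact hdist.trans (by gcongr)
    _ = γ * (μbar * ‖w 0 - wstar‖) := by field_simp
    _ ≤ γ * ‖gradient h (w 0)‖ := by
      gcongr
      exact hstrong.mul_norm_sub_le_norm_gradient (hdiff _) (hdiff _) hcrit

/-- Theorem 2 of the paper: with `n ≥ 2β log((L+μ)/(γμ̄))` gradient descent iterations
(`β = 2/(αμ̄(2 - α(L+μ)))`), the iterate is a `γ`-inexact solution:
`‖∇h(w⁽ⁿ⁾)‖ ≤ γ‖∇h(w⁽⁰⁾)‖`. -/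
theorem gd_gamma_inexact_after_enough_iterations
    {d : ℕ} (h : EuclideanSpace ℝ (Fin d) → ℝ)
    (L μ μbar α γ β : ℝ) (hL : 0 < L) (hμ : 0 < μ) (hμbar : 0 < μbar)
    (hα : 0 < α) (hα2 : α < 2 / (L + μ))
    (hγ0 : 0 < γ) (hγ1 : γ ≤ 1)
    (hβ : β = 2 / (α * μbar * (2 - α * (L + μ))))
    (hdiff : Differentiable ℝ h)
    (hsc : ConvexOn ℝ Set.univ
      (fun v : EuclideanSpace ℝ (Fin d) => h v - (μbar / 2) * ‖v‖ ^ 2))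
    (hLip : ∀ x y, ‖gradient h x - gradient h y‖ ≤ (L + μ) * ‖x - y‖)
    (wstar : EuclideanSpace ℝ (Fin d)) (hmin : ∀ v, h wstar ≤ h v)
    (w : ℕ → EuclideanSpace ℝ (Fin d))
    (hiter : ∀ k : ℕ, w (k + 1) = w k - α • gradient h (w k))
    (n : ℕ) (hn : (n : ℝ) ≥ 2 * β * Real.log ((L + μ) / (γ * μbar))) :
    ‖gradient h (w n)‖ ≤ γ * ‖gradient h (w 0)‖ :=
  gd_gamma_inexact_after_enough_iterations_general h L μ μbar α γ β hμbar hα hα2 hγ0 hβ hdiff hsc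
    hLip wstar hmin w hiter n hn
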